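/- arXiv:2406.16857 — 4 statements merged into one kernel-verified Lean document; each statement's English description precedes it below -/
import Mathlib

section
/- Let A = (δ : A₁ → A₀, ▷, ◁) be a crossed module of associative algebras. Equip A₀ and A₁ with the commutator brackets [x,y]₀ = xy − yx and [E,F]₁ = E*F − F*E, and define an action of Lie(A₀) on Lie(A₁) by x ⊳ E := x ▷ E − E ◁ x. Then (δ : Lie(A₁) → Lie(A₀), ⊳) is a crossed module of Lie algebras: δ is a Lie algebra morphism, ⊳ is a Lie algebra action by derivations, δ(x ⊳ E) = [x, δ(E)]₀, and δ(E) ⊳ E' = [E, E']₁. -/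
/-- A crossed module of associative algebras. -/
structure CrossedModuleAlg (R : Type*) [CommRing R] (A₀ A₁ : Type*)
    [Ring A₀] [Algebra R A₀] [NonUnitalRing A₁] [Module R A₁] where
  δ : A₁ → A₀
  actL : A₀ → A₁ → A₁
  actR : A₁ → A₀ → A₁
  δ_add : ∀ E F, δ (E + F) = δ E + δ F
  δ_mul : ∀ E F, δ (E * F) = δ E * δ F
  actL_add_left : ∀ a b E, actL (a + b) E = actL a E + actL b E
  actL_add_right : ∀ a E F, actL a (E + F) = actL a E + actL a F
  actL_smul : ∀ (c : R) a E, actL a (c • E) = c • actL a E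
  actR_add_left : ∀ E F a, actR (E + F) a = actR E a + actR F a
  actR_add_right : ∀ E a b, actR E (a + b) = actR E a + actR E b
  actR_smul : ∀ (c : R) E a, actR (c • E) a = c • actR E a
  actL_mul : ∀ a b E, actL (a * b) E = actL a (actL b E)
  actR_mul : ∀ E a b, actR (actR E a) b = actR E (a * b)
  actL_actR : ∀ a E b, actL a (actR E b) = actR (actL a E) b
  actL_one : ∀ E, actL 1 E = E
  actR_one : ∀ E, actR E 1 = E
  actL_prod : ∀ a E F, actL a (E * F) = actL a E * F
  actR_prod : ∀ E F a, actR (E * F) a = E * actR F a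
  middle : ∀ E a b F, actR E a * actL b F = E * actL (a * b) F
  peiffer₁L : ∀ a E, δ (actL a E) = a * δ E
  peiffer₁R : ∀ E a, δ (actR E a) = δ E * a
  peiffer₂L : ∀ E F, actL (δ E) F = E * F
  peiffer₂R : ∀ E F, actR E (δ F) = E * F

/-- Applying the commutator-bracket `Lie` functor to a crossed module of algebras yields a
crossed module of Lie algebras: with `[x,y]₀ = xy − yx`, `[E,F]₁ = E*F − F*E` and
`x ⊳ E := x ▷ E − E ◁ x`, the map `δ` is a Lie algebra morphism, `⊳` is a Lie algebra
action by derivations, and the two Peiffer identities hold. -/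
theorem crossedModuleAlg_to_lie {R A₀ A₁ : Type*} [CommRing R]
    [Ring A₀] [Algebra R A₀] [NonUnitalRing A₁] [Module R A₁]
    (C : CrossedModuleAlg R A₀ A₁) :
    -- δ is a morphism of Lie algebras (for the commutator brackets)
    (∀ E F : A₁, C.δ (E * F - F * E) = C.δ E * C.δ F - C.δ F * C.δ E) ∧
    -- ⊳ acts by derivations of the bracket on A₁
    (∀ (x : A₀) (E F : A₁),
      C.actL x (E * F - F * E) - C.actR (E * F - F * E) x =
        ((C.actL x E - C.actR E x) * F - F * (C.actL x E - C.actR E x)) +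
          (E * (C.actL x F - C.actR F x) - (C.actL x F - C.actR F x) * E)) ∧
    -- ⊳ is a Lie algebra action
    (∀ (x y : A₀) (E : A₁),
      C.actL (x * y - y * x) E - C.actR E (x * y - y * x) =
        (C.actL x (C.actL y E - C.actR E y) - C.actR (C.actL y E - C.actR E y) x) -
          (C.actL y (C.actL x E - C.actR E x) - C.actR (C.actL x E - C.actR E x) y)) ∧
    -- first Peiffer identity: δ(x ⊳ E) = [x, δ E]₀
    (∀ (x : A₀) (E : A₁),
      C.δ (C.actL x E - C.actR E x) = x * C.δ E - C.δ E * x) ∧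
    -- second Peiffer identity: δ(E) ⊳ E' = [E, E']₁
    (∀ E E' : A₁,
      C.actL (C.δ E) E' - C.actR E' (C.δ E) = E * E' - E' * E) := by
  have hδ : ∀ E F : A₁, C.δ (E - F) = C.δ E - C.δ F :=
    fun E F => (AddMonoidHom.mk' C.δ C.δ_add).map_sub E F
  have hL : ∀ (a : A₀) (E F : A₁), C.actL a (E - F) = C.actL a E - C.actL a F :=
    fun a E F => (AddMonoidHom.mk' (C.actL a) (C.actL_add_right a)).map_sub E F
  have hLl : ∀ (a b : A₀) (E : A₁), C.actL (a - b) E = C.actL a E - C.actL b E :=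
    fun a b E =>
      (AddMonoidHom.mk' (fun a => C.actL a E) (fun a b => C.actL_add_left a b E)).map_sub a b
  have hR : ∀ (E F : A₁) (a : A₀), C.actR (E - F) a = C.actR E a - C.actR F a :=
    fun E F a =>
      (AddMonoidHom.mk' (fun E => C.actR E a) (fun E F => C.actR_add_left E F a)).map_sub E F
  have hRr : ∀ (E : A₁) (a b : A₀), C.actR E (a - b) = C.actR E a - C.actR E b :=
    fun E a b =>
      (AddMonoidHom.mk' (C.actR E) (C.actR_add_right E)).map_sub a b
  have key1 : ∀ (E : A₁) (x : A₀) (F : A₁), C.actR E x * F = E * C.actL x F := by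
    intro E x F
    have h := C.middle E x 1 F
    simpa [C.actL_one] using h
  refine ⟨?_, ?_, ?_, ?_, ?_⟩
  · intro E F
    rw [hδ, C.δ_mul, C.δ_mul]
  · intro x E F
    simp only [hL, hR, C.actL_prod, C.actR_prod, sub_mul, mul_sub]
    rw [key1 E x F, key1 F x E]
    abel
  · intro x y E
    simp only [hLl, hRr, hL, hR, C.actL_mul, ← C.actR_mul, C.actL_actR]
    abel
  · intro x E
    rw [hδ, C.peiffer₁L, C.peiffer₁R]
  · intro E E'
    rw [C.peiffer₂L, C.peiffer₂R]
end

section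
/- Let A₀ be a unital Banach algebra and α : V → A₀ a bounded linear map from a finite-dimensional Hilbert space V. For a smooth path x : [0,1] → V, let F^α(x) ∈ A₀ be the solution at time 1 of dF_t/dt = F_t · α(dx_t/dt), F_0 = 1, and let S(x) = 1 + Σ_{n≥1} ∫_{0<t₁<⋯<t_n<1} dx_{t₁} ⊗ ⋯ ⊗ dx_{t_n} be the path signature. If ã : T₀((V)) ⊇ E₀(V) → A₀ is the unique continuous algebra morphism extending α, then F^α(x) = ã(S(x)). -/
open intervalIntegral

/-- The level-`n` path signature of a path `x : ℝ → ℝ^d`, in coordinates: for a word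
`w : Fin n → Fin d`, `sig d x n t w` is the iterated integral
`∫_{0 < t₁ < ⋯ < t_n < t} dx^{w 0}_{t₁} ⋯ dx^{w (n-1)}_{t_n}`. -/
noncomputable def sig (d : ℕ) (x : ℝ → EuclideanSpace ℝ (Fin d)) :
    (n : ℕ) → ℝ → (Fin n → Fin d) → ℝ
  | 0, _, _ => 1
  | n + 1, t, w =>
    ∫ u in (0:ℝ)..t,
      sig d x n u (fun i => w i.castSucc) * deriv (fun s => x s (w (Fin.last n))) u

section Aux

variable {d : ℕ} {A₀ : Type*} [NormedRing A₀] [NormedAlgebra ℝ A₀] [CompleteSpace A₀]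

lemma deriv_xj_continuous {x : ℝ → EuclideanSpace ℝ (Fin d)} (hx : ContDiff ℝ (⊤ : ℕ∞) x) (j : Fin d) :
    Continuous (deriv fun s => x s j) :=
  by
  have : (fun s => x s j) = (EuclideanSpace.proj (𝕜 := ℝ) j) ∘ x := rfl
  rw [this]
  exact ((EuclideanSpace.proj (𝕜 := ℝ) j).contDiff.comp hx).continuous_deriv (by simp)

lemma deriv_xj {x : ℝ → EuclideanSpace ℝ (Fin d)} (hx : ContDiff ℝ (⊤ : ℕ∞) x) (j : Fin d) (t : ℝ) :
    deriv (fun s => x s j) t = deriv x t j := by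
  have h := (hx.differentiable (by simp) t).hasDerivAt
  exact ((EuclideanSpace.proj j).hasFDerivAt.comp_hasDerivAt t h).deriv

lemma sig_continuous (x : ℝ → EuclideanSpace ℝ (Fin d)) (hx : ContDiff ℝ (⊤ : ℕ∞) x) :
    ∀ (n : ℕ) (w : Fin n → Fin d), Continuous fun t => sig d x n t w := by
  intro n
  induction n with
  | zero => intro w; simpa [sig] using continuous_const
  | succ n ih =>
    intro w
    have hc : Continuous fun u =>
        sig d x n u (fun i => w i.castSucc) * deriv (fun s => x s (w (Fin.last n))) u :=
      (ih _).mul (deriv_xj_continuous hx _)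
    have : ∀ t : ℝ, HasDerivAt (fun t => sig d x (n+1) t w)
        (sig d x n t (fun i => w i.castSucc) * deriv (fun s => x s (w (Fin.last n))) t) t := by
      intro t
      exact intervalIntegral.integral_hasDerivAt_right (hc.intervalIntegrable 0 t)
        (hc.stronglyMeasurableAtFilter _ _) hc.continuousAt
    exact continuous_iff_continuousAt.2 fun t => (this t).continuousAt

lemma sig_succ_hasDerivAt {x : ℝ → EuclideanSpace ℝ (Fin d)} (hx : ContDiff ℝ (⊤ : ℕ∞) x)
    (n : ℕ) (w : Fin (n+1) → Fin d) (t : ℝ) :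
    HasDerivAt (fun t => sig d x (n+1) t w)
      (sig d x n t (fun i => w i.castSucc) * deriv (fun s => x s (w (Fin.last n))) t) t := by
  have hc : Continuous fun u =>
      sig d x n u (fun i => w i.castSucc) * deriv (fun s => x s (w (Fin.last n))) u :=
    (sig_continuous x hx n _).mul (deriv_xj_continuous hx _)
  exact intervalIntegral.integral_hasDerivAt_right (hc.intervalIntegrable 0 t)
    (hc.stronglyMeasurableAtFilter _ _) hc.continuousAt

end Aux
section Aux2

variable {d : ℕ} {A₀ : Type*} [NormedRing A₀] [NormedAlgebra ℝ A₀] [CompleteSpace A₀]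

noncomputable def sigP (α : EuclideanSpace ℝ (Fin d) →L[ℝ] A₀)
    (x : ℝ → EuclideanSpace ℝ (Fin d)) (n : ℕ) (t : ℝ) : A₀ :=
  ∑ w : Fin n → Fin d,
    sig d x n t w • (List.ofFn fun i => α (EuclideanSpace.single (w i) 1)).prod

lemma sigP_zero (α : EuclideanSpace ℝ (Fin d) →L[ℝ] A₀) (x : ℝ → EuclideanSpace ℝ (Fin d))
    (t : ℝ) : sigP α x 0 t = 1 := by
  simp [sigP, sig]

lemma sigP_succ_zero (α : EuclideanSpace ℝ (Fin d) →L[ℝ] A₀) (x : ℝ → EuclideanSpace ℝ (Fin d))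
    (n : ℕ) : sigP α x (n+1) 0 = 0 := by
  simp [sigP, sig]

lemma alpha_eq (α : EuclideanSpace ℝ (Fin d) →L[ℝ] A₀) (v : EuclideanSpace ℝ (Fin d)) :
    α v = ∑ j, v j • α (EuclideanSpace.single j 1) := by
  conv_lhs => rw [← (EuclideanSpace.basisFun (Fin d) ℝ).sum_repr v]
  rw [map_sum]
  refine Finset.sum_congr rfl fun j _ => ?_
  rw [map_smul, EuclideanSpace.basisFun_repr, EuclideanSpace.basisFun_apply]

lemma sigP_succ_hasDerivAt (α : EuclideanSpace ℝ (Fin d) →L[ℝ] A₀)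
    {x : ℝ → EuclideanSpace ℝ (Fin d)} (hx : ContDiff ℝ (⊤ : ℕ∞) x) (n : ℕ) (t : ℝ) :
    HasDerivAt (fun t => sigP α x (n+1) t) (sigP α x n t * α (deriv x t)) t := by
  have h : HasDerivAt (fun t => sigP α x (n+1) t)
      (∑ w : Fin (n+1) → Fin d,
        (sig d x n t (fun i => w i.castSucc) * deriv (fun s => x s (w (Fin.last n))) t) •
          (List.ofFn fun i => α (EuclideanSpace.single (w i) 1)).prod) t := by
    exact HasDerivAt.fun_sum fun w _ => (sig_succ_hasDerivAt hx n w t).smul_const _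
  convert h using 1
  rw [← Fintype.sum_equiv (Fin.snocEquiv (fun _ => Fin d)) _ _ (fun p => rfl)]
  rw [Fintype.sum_prod_type, sigP, alpha_eq α (deriv x t), Finset.sum_mul]
  rw [Finset.sum_comm]
  refine Finset.sum_congr rfl fun w' _ => ?_
  rw [Finset.mul_sum]
  refine Finset.sum_congr rfl fun j _ => ?_
  have h1 : ∀ i : Fin n, (Fin.snocEquiv (fun _ => Fin d) (j, w')) i.castSucc = w' i := by
    intro i; simp [Fin.snocEquiv]
  have h2 : (Fin.snocEquiv (fun _ => Fin d) (j, w')) (Fin.last n) = j := by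
    simp [Fin.snocEquiv]
  have h3 : (List.ofFn fun i : Fin (n+1) =>
        α (EuclideanSpace.single ((Fin.snocEquiv (fun _ => Fin d) (j, w')) i) 1)).prod
      = (List.ofFn fun i : Fin n => α (EuclideanSpace.single (w' i) 1)).prod *
          α (EuclideanSpace.single j 1) := by
    rw [List.ofFn_succ', List.prod_concat, h2]
    congr 1
    exact congrArg List.prod (congrArg List.ofFn (funext fun i => by rw [h1]))
  have h4 : (fun i : Fin n => (Fin.snocEquiv (fun _ => Fin d) (j, w')) i.castSucc) = w' :=
    funext h1
  rw [h4, h2, h3, deriv_xj hx j t, smul_mul_smul]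

end Aux2


set_option maxHeartbeats 1000000 in
/-- **Universal property of the path signature (parallel transport factors through the
signature).**  Let `A₀` be a unital Banach algebra, `α : V → A₀` a bounded linear map on
`V = ℝ^d`, and `x` a smooth path.  If `F` solves the parallel transport equation
`dF_t = F_t · α(dx_t)`, `F 0 = 1`, then `F 1 = ã(S(x))`, where `ã` is the unique
continuous algebra morphism extending `α` (expressed in coordinates:
`ã(S(x)) = ∑_n ∑_{w : Fin n → Fin d} S^{(n)}(x)_w · α(e_{w 0}) ⋯ α(e_{w (n-1)})`). -/
theorem parallel_transport_factors_through_signature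
    {d : ℕ} {A₀ : Type*} [NormedRing A₀] [NormedAlgebra ℝ A₀] [CompleteSpace A₀]
    (α : EuclideanSpace ℝ (Fin d) →L[ℝ] A₀)
    (x : ℝ → EuclideanSpace ℝ (Fin d)) (hx : ContDiff ℝ (⊤ : ℕ∞) x)
    (F : ℝ → A₀) (hF0 : F 0 = 1)
    (hF : ∀ t ∈ Set.Icc (0:ℝ) 1, HasDerivAt F (F t * α (deriv x t)) t) :
    F 1 = ∑' n : ℕ, ∑ w : Fin n → Fin d,
        sig d x n 1 w • (List.ofFn fun i => α (EuclideanSpace.single (w i) 1)).prod := by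
  classical
  set G : ℕ → ℝ → A₀ := fun N t => ∑ n ∈ Finset.range N, sigP α x n t with hGdef
  have hGd : ∀ (N : ℕ) (t : ℝ), HasDerivAt (fun t => G (N+1) t) (G N t * α (deriv x t)) t := by
    intro N t
    have heq : (fun t => G (N+1) t) =
        fun t => (∑ n ∈ Finset.range N, sigP α x (n+1) t) + sigP α x 0 t := by
      funext s; simp only [hGdef]; rw [Finset.sum_range_succ']
    rw [heq]
    have h1 : HasDerivAt (fun t => ∑ n ∈ Finset.range N, sigP α x (n+1) t)
        (∑ n ∈ Finset.range N, sigP α x n t * α (deriv x t)) t :=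
      HasDerivAt.fun_sum fun n _ => sigP_succ_hasDerivAt α hx n t
    have h2 : HasDerivAt (fun t => sigP α x 0 t) 0 t := by
      simp only [sigP_zero]; exact hasDerivAt_const t 1
    simpa [hGdef, Finset.sum_mul] using h1.fun_add h2
  have hGinit : ∀ N : ℕ, G (N+1) 0 = 1 := by
    intro N
    simp only [hGdef]
    rw [Finset.sum_range_succ']
    simp [sigP_succ_zero, sigP_zero]
  have hGcont : ∀ N, Continuous (G N) := by
    intro N
    refine continuous_finset_sum _ fun n _ => ?_
    show Continuous fun t => ∑ w : Fin n → Fin d,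
        sig d x n t w • (List.ofFn fun i => α (EuclideanSpace.single (w i) 1)).prod
    exact continuous_finset_sum _ fun w _ => (sig_continuous x hx n w).smul continuous_const
  have hFc : ContinuousOn F (Set.Icc 0 1) :=
    fun t ht => ((hF t ht).continuousAt).continuousWithinAt
  have hαc : Continuous fun u => α (deriv x u) := α.continuous.comp (hx.continuous_deriv (by simp))
  obtain ⟨M, hM⟩ := (isCompact_Icc (a := (0:ℝ)) (b := 1)).exists_bound_of_continuousOn hFc
  obtain ⟨C, hC⟩ := (isCompact_Icc (a := (0:ℝ)) (b := 1)).exists_bound_of_continuousOn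
    hαc.continuousOn
  have h01 : (0:ℝ) ∈ Set.Icc (0:ℝ) 1 := ⟨le_refl _, zero_le_one⟩
  have hC0 : 0 ≤ C := le_trans (norm_nonneg _) (hC 0 h01)
  have hM0 : 0 ≤ M := le_trans (norm_nonneg _) (hM 0 h01)
  have key : ∀ N : ℕ, ∀ t ∈ Set.Icc (0:ℝ) 1, ‖F t - G N t‖ ≤ M * C^N * t^N / (Nat.factorial N : ℝ) := by
    intro N
    induction N with
    | zero =>
      intro t ht
      simp only [hGdef, Finset.range_zero, Finset.sum_empty, sub_zero, pow_zero, mul_one,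
        Nat.factorial_zero, Nat.cast_one, div_one]
      exact hM t ht
    | succ N ih =>
      intro t ht
      obtain ⟨ht0, ht1⟩ := ht
      have hsub : Set.uIcc (0:ℝ) t ⊆ Set.Icc 0 1 := by
        rw [Set.uIcc_of_le ht0]
        exact Set.Icc_subset_Icc le_rfl ht1
      have hder : ∀ u ∈ Set.uIcc (0:ℝ) t, HasDerivAt (fun s => F s - G (N+1) s)
          ((F u - G N u) * α (deriv x u)) u := by
        intro u hu
        have := (hF u (hsub hu)).fun_sub (hGd N u)
        simpa [sub_mul] using this
      have hint : IntervalIntegrable (fun u => (F u - G N u) * α (deriv x u))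
          MeasureTheory.volume 0 t := by
        apply ContinuousOn.intervalIntegrable
        exact ((hFc.mono hsub).sub (hGcont N).continuousOn).mul
          (hαc.continuousOn)
      have heq := intervalIntegral.integral_eq_sub_of_hasDerivAt hder hint
      have hzero : F 0 - G (N+1) 0 = 0 := by rw [hF0, hGinit]; exact sub_self 1
      rw [hzero, sub_zero] at heq
      rw [← heq]
      have hb : ∀ᵐ u ∂(MeasureTheory.volume.restrict (Set.uIoc (0:ℝ) t)),
          ‖(F u - G N u) * α (deriv x u)‖ ≤ (M * C^N * u^N / (Nat.factorial N : ℝ)) * C := by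
        rw [Set.uIoc_of_le ht0]
        refine (MeasureTheory.ae_restrict_iff' measurableSet_Ioc).2 ?_
        refine Filter.Eventually.of_forall fun u hu => ?_
        have hu' : u ∈ Set.Icc (0:ℝ) 1 := ⟨le_of_lt hu.1, hu.2.trans ht1⟩
        refine (norm_mul_le _ _).trans ?_
        have hu0 : (0:ℝ) ≤ u := le_of_lt hu.1
        exact mul_le_mul (ih u hu') (hC u hu') (norm_nonneg _)
          (div_nonneg (mul_nonneg (mul_nonneg hM0 (pow_nonneg hC0 _)) (pow_nonneg hu0 _))
            (Nat.cast_nonneg _))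
      have hgint : IntervalIntegrable (fun u => (M * C^N * u^N / (Nat.factorial N : ℝ)) * C)
          MeasureTheory.volume 0 t := by
        apply Continuous.intervalIntegrable
        continuity
      have := intervalIntegral.norm_integral_le_abs_of_norm_le hb hgint
      refine this.trans ?_
      have hval : (∫ u in (0:ℝ)..t, (M * C^N * u^N / (Nat.factorial N : ℝ)) * C)
          = M * C^(N+1) * t^(N+1) / (Nat.factorial (N+1) : ℝ) := by
        have : (fun u : ℝ => (M * C^N * u^N / (Nat.factorial N : ℝ)) * C)
            = fun u : ℝ => (M * C^N / (Nat.factorial N : ℝ) * C) * u^N := by funext u; ring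
        rw [this, intervalIntegral.integral_const_mul, integral_pow]
        rw [Nat.factorial_succ]
        have hfac : ((Nat.factorial N : ℝ)) ≠ 0 := Nat.cast_ne_zero.2 (Nat.factorial_ne_zero N)
        push_cast
        field_simp
        ring
      rw [hval, abs_of_nonneg (by positivity)]
  -- conclusion
  have hbnd : ∀ N : ℕ, ‖F 1 - G N 1‖ ≤ M * C^N / (Nat.factorial N : ℝ) := by
    intro N
    have := key N 1 ⟨zero_le_one, le_rfl⟩
    rwa [one_pow, mul_one] at this
  have htend : Filter.Tendsto (fun N => G N 1) Filter.atTop (nhds (F 1)) := by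
    rw [← tendsto_sub_nhds_zero_iff]
    refine squeeze_zero_norm (fun N => by simpa [norm_sub_rev] using hbnd N) ?_
    have : (fun N : ℕ => M * C^N / (Nat.factorial N : ℝ)) = fun N : ℕ => M * (C^N / (Nat.factorial N : ℝ)) := by
      funext N; ring
    rw [this]
    simpa using (Real.summable_pow_div_factorial C).tendsto_atTop_zero.const_mul M
  have hsummable : Summable fun n => sigP α x n 1 := by
    rw [← summable_nat_add_iff 1]
    refine Summable.of_norm_bounded
      (g := fun n => M * C^(n+1) / (Nat.factorial (n+1) : ℝ) + M * C^(n+2) / (Nat.factorial (n+2) : ℝ)) ?_ ?_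
    · have h1 : Summable fun n : ℕ => M * C^(n+1) / (Nat.factorial (n+1) : ℝ) := by
        have := (summable_nat_add_iff (f := fun n : ℕ => M * (C^n / (Nat.factorial n : ℝ))) 1).2
          ((Real.summable_pow_div_factorial C).mul_left M)
        refine this.congr fun n => by ring
      have h2 : Summable fun n : ℕ => M * C^(n+2) / (Nat.factorial (n+2) : ℝ) := by
        have := (summable_nat_add_iff (f := fun n : ℕ => M * (C^n / (Nat.factorial n : ℝ))) 2).2
          ((Real.summable_pow_div_factorial C).mul_left M)
        refine this.congr fun n => by ring
      exact h1.add h2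
    · intro n
      have : sigP α x (n+1) 1 = (F 1 - G (n+1) 1) - (F 1 - G (n+2) 1) := by
        simp only [hGdef]
        rw [Finset.sum_range_succ (n := n+1)]
        abel
      rw [this]
      exact (norm_sub_le _ _).trans (add_le_add (hbnd (n+1)) (hbnd (n+2)))
  have htend2 : Filter.Tendsto (fun N => G N 1) Filter.atTop
      (nhds (∑' n : ℕ, sigP α x n 1)) := hsummable.hasSum.tendsto_sum_nat
  have hfin := tendsto_nhds_unique htend htend2
  rw [hfin]
  exact tsum_congr fun n => rfl
end

section
/- Let T₁(V) carry the quotient Hilbert norms ‖E‖ = inf_{P ∈ Pf} ‖E + P‖ on each level (identified with the orthogonal complement of the Peiffer subspace). Then multiplication in T₁(V) is submultiplicative: for E ∈ T₁^{(n)}(V) and F ∈ T₁^{(m)}(V), ‖E * F‖ ≤ ‖E‖·‖F‖. Moreover the bimodule actions are short: for a ∈ V^{⊗n} and E ∈ T₁^{(m)}(V), ‖a ▷ E‖ ≤ ‖a‖·‖E‖ and ‖E ◁ a‖ ≤ ‖E‖·‖a‖. -/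
open scoped RealInnerProductSpace

/-- The quotient norm `‖x‖ = inf_{P ∈ S} ‖x + P‖` associated to a subspace `S`. -/
noncomputable def qnorm {E : Type*} [SeminormedAddCommGroup E] [Module ℝ E]
    (S : Submodule ℝ E) (x : E) : ℝ :=
  sInf ((fun P => ‖x + P‖) '' (S : Set E))

lemma qnorm_le {E : Type*} [SeminormedAddCommGroup E] [Module ℝ E]
    (S : Submodule ℝ E) (x : E) {P : E} (hP : P ∈ S) : qnorm S x ≤ ‖x + P‖ := by
  apply csInf_le
  · exact ⟨0, by rintro r ⟨Q, hQ, rfl⟩; exact norm_nonneg _⟩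
  · exact ⟨P, hP, rfl⟩

lemma qnorm_nonneg' {E : Type*} [SeminormedAddCommGroup E] [Module ℝ E]
    (S : Submodule ℝ E) (x : E) : 0 ≤ qnorm S x := by
  refine le_csInf ⟨_, ⟨0, S.zero_mem, rfl⟩⟩ ?_
  rintro r ⟨Q, hQ, rfl⟩; exact norm_nonneg _

lemma qnorm_congr {E : Type*} [SeminormedAddCommGroup E] [Module ℝ E]
    (S : Submodule ℝ E) {x y : E} (h : x - y ∈ S) : qnorm S x = qnorm S y := by
  have key : ∀ x y : E, x - y ∈ S → qnorm S x ≤ qnorm S y := by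
    intro x y h
    refine le_csInf ⟨_, ⟨0, S.zero_mem, rfl⟩⟩ ?_
    rintro r ⟨Q, hQ, rfl⟩
    have : x + (Q + (y - x)) = y + Q := by abel
    calc qnorm S x ≤ ‖x + (Q + (y - x))‖ :=
          qnorm_le S x (S.add_mem hQ (by simpa [neg_sub] using S.neg_mem h))
      _ = ‖y + Q‖ := by rw [this]
  exact le_antisymm (key x y h) (key y x (by simpa using S.neg_mem h))

lemma le_mul_qnorm {E : Type*} [SeminormedAddCommGroup E] [Module ℝ E]
    (S : Submodule ℝ E) {y : E} {c X : ℝ} (hc : 0 ≤ c)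
    (h : ∀ P ∈ S, X ≤ c * ‖y + P‖) : X ≤ c * qnorm S y := by
  rcases hc.eq_or_lt with rfl | hc
  · simpa using h 0 S.zero_mem
  · rw [← div_le_iff₀' hc]
    refine le_csInf ⟨_, ⟨0, S.zero_mem, rfl⟩⟩ ?_
    rintro r ⟨Q, hQ, rfl⟩
    rw [div_le_iff₀' hc]; exact h Q hQ

lemma qnorm_core {Xnm : Type*} [NormedAddCommGroup Xnm] [InnerProductSpace ℝ Xnm]
    (Pfnm : Submodule ℝ Xnm) (u v : Xnm) (a b : ℝ)
    (ha : 0 ≤ a) (hb : 0 ≤ b)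
    (hu : ‖u‖ ≤ Real.sqrt 2 * (a * b)) (hv : ‖v‖ ≤ Real.sqrt 2 * (a * b))
    (hmem : u - v ∈ Pfnm) (horth : ⟪u, v⟫ = (0 : ℝ)) :
    qnorm Pfnm u ≤ a * b := by
  have hP : (2⁻¹ : ℝ) • (v - u) ∈ Pfnm := by
    have := Pfnm.smul_mem (2⁻¹ : ℝ) (Pfnm.neg_mem hmem)
    simpa [neg_sub] using this
  have heq : u + (2⁻¹ : ℝ) • (v - u) = (2⁻¹ : ℝ) • (u + v) := by
    rw [smul_sub, smul_add]; module
  have h0 : ⟪v, u⟫ = (0 : ℝ) := by rw [real_inner_comm]; exact horth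
  have hsum : ‖u + v‖ ^ 2 = ‖u‖ ^ 2 + ‖v‖ ^ 2 := by
    rw [← real_inner_self_eq_norm_sq, ← real_inner_self_eq_norm_sq,
      ← real_inner_self_eq_norm_sq, inner_add_add_self, horth, h0]
    ring
  have h2 : Real.sqrt 2 ^ 2 = 2 := Real.sq_sqrt (by norm_num)
  have hab : 0 ≤ a * b := mul_nonneg ha hb
  have hsq : ‖u + v‖ ^ 2 ≤ (2 * (a * b)) ^ 2 := by
    rw [hsum]
    have h1 : ‖u‖ ^ 2 ≤ 2 * (a * b) ^ 2 := by
      calc ‖u‖ ^ 2 ≤ (Real.sqrt 2 * (a * b)) ^ 2 :=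
        pow_le_pow_left₀ (norm_nonneg _) hu 2
      _ = 2 * (a * b) ^ 2 := by rw [mul_pow, h2]
    have h1' : ‖v‖ ^ 2 ≤ 2 * (a * b) ^ 2 := by
      calc ‖v‖ ^ 2 ≤ (Real.sqrt 2 * (a * b)) ^ 2 :=
        pow_le_pow_left₀ (norm_nonneg _) hv 2
      _ = 2 * (a * b) ^ 2 := by rw [mul_pow, h2]
    nlinarith
  have hnorm : ‖u + v‖ ≤ 2 * (a * b) := by
    have := Real.sqrt_le_sqrt hsq
    rwa [Real.sqrt_sq (norm_nonneg _), Real.sqrt_sq (by positivity)] at this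
  calc qnorm Pfnm u ≤ ‖u + (2⁻¹ : ℝ) • (v - u)‖ := qnorm_le Pfnm u hP
    _ = 2⁻¹ * ‖u + v‖ := by rw [heq, norm_smul]; norm_num
    _ ≤ a * b := by linarith

/-- **Submultiplicativity of the quotient norms on the free crossed module `T₁(V)`.**
Here `Xn`, `Xm`, `Xnm` play the role of the pre-quotient levels `T̄₁^{(n)}`, `T̄₁^{(m)}`,
`T̄₁^{(n+m)}` (inner product spaces), `Tn`, `Tm` the tensor levels `V^{⊗n}`, `V^{⊗m}`,
`mulL a E = a·E` and `mulR E b = E·b` the (norm-multiplicative) bimodule products,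
`δn`, `δm` the boundary maps (of norm `≤ √2`, vanishing on the Peiffer subspaces), with
`δ(E)·F ≡ E·δ(F)` mod the Peiffer subspace `Pfnm` and `δ(E)·F ⟂ E·δ(F)`.
Then, in the quotient norms:  `‖E * F‖ ≤ ‖E‖·‖F‖`, and the bimodule actions are short:
`‖a ▷ E‖ ≤ ‖a‖·‖E‖` and `‖E ◁ a‖ ≤ ‖E‖·‖a‖`. -/
theorem T1_quotient_norm_submultiplicative
    {Tn Tm Xn Xm Xnm : Type*}
    [NormedAddCommGroup Tn] [NormedSpace ℝ Tn]
    [NormedAddCommGroup Tm] [NormedSpace ℝ Tm]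
    [NormedAddCommGroup Xn] [InnerProductSpace ℝ Xn]
    [NormedAddCommGroup Xm] [InnerProductSpace ℝ Xm]
    [NormedAddCommGroup Xnm] [InnerProductSpace ℝ Xnm]
    (δn : Xn →ₗ[ℝ] Tn) (δm : Xm →ₗ[ℝ] Tm)
    (mulL : Tn →ₗ[ℝ] Xm →ₗ[ℝ] Xnm) (mulR : Xn →ₗ[ℝ] Tm →ₗ[ℝ] Xnm)
    (Pfn : Submodule ℝ Xn) (Pfm : Submodule ℝ Xm) (Pfnm : Submodule ℝ Xnm)
    (hmulL_norm : ∀ (a : Tn) (E : Xm), ‖mulL a E‖ = ‖a‖ * ‖E‖)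
    (hmulR_norm : ∀ (E : Xn) (b : Tm), ‖mulR E b‖ = ‖E‖ * ‖b‖)
    (hδn_norm : ∀ E : Xn, ‖δn E‖ ≤ Real.sqrt 2 * ‖E‖)
    (hδm_norm : ∀ F : Xm, ‖δm F‖ ≤ Real.sqrt 2 * ‖F‖)
    (hδn_ker : ∀ P ∈ Pfn, δn P = 0) (hδm_ker : ∀ P ∈ Pfm, δm P = 0)
    (hPf : ∀ (E : Xn) (F : Xm), mulL (δn E) F - mulR E (δm F) ∈ Pfnm)
    (hPfL : ∀ (a : Tn), ∀ P ∈ Pfm, mulL a P ∈ Pfnm)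
    (hPfR : ∀ P ∈ Pfn, ∀ (b : Tm), mulR P b ∈ Pfnm)
    (hortho : ∀ (E : Xn) (F : Xm), ⟪mulL (δn E) F, mulR E (δm F)⟫ = (0 : ℝ)) :
    (∀ (E : Xn) (F : Xm),
        qnorm Pfnm (mulL (δn E) F) ≤ qnorm Pfn E * qnorm Pfm F) ∧
    (∀ (a : Tn) (E : Xm), qnorm Pfnm (mulL a E) ≤ ‖a‖ * qnorm Pfm E) ∧
    (∀ (E : Xn) (a : Tm), qnorm Pfnm (mulR E a) ≤ qnorm Pfn E * ‖a‖) := by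
  -- The pre-quotient core bound, for arbitrary representatives.
  have hcore : ∀ (E : Xn) (F : Xm), qnorm Pfnm (mulL (δn E) F) ≤ ‖E‖ * ‖F‖ := by
    intro E F
    refine qnorm_core Pfnm _ (mulR E (δm F)) ‖E‖ ‖F‖ (norm_nonneg _) (norm_nonneg _)
      ?_ ?_ (hPf E F) (hortho E F)
    · rw [hmulL_norm]
      calc ‖δn E‖ * ‖F‖ ≤ (Real.sqrt 2 * ‖E‖) * ‖F‖ :=
            mul_le_mul_of_nonneg_right (hδn_norm E) (norm_nonneg _)
        _ = Real.sqrt 2 * (‖E‖ * ‖F‖) := by ring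
    · rw [hmulR_norm]
      calc ‖E‖ * ‖δm F‖ ≤ ‖E‖ * (Real.sqrt 2 * ‖F‖) :=
            mul_le_mul_of_nonneg_left (hδm_norm F) (norm_nonneg _)
        _ = Real.sqrt 2 * (‖E‖ * ‖F‖) := by ring
  -- The representative-independent bound.
  have hrep : ∀ (E : Xn) (F : Xm), ∀ P ∈ Pfn, ∀ Q ∈ Pfm,
      qnorm Pfnm (mulL (δn E) F) ≤ ‖E + P‖ * ‖F + Q‖ := by
    intro E F P hP Q hQ
    have hδ : δn (E + P) = δn E := by rw [map_add, hδn_ker P hP, add_zero]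
    have hc : mulL (δn E) F - mulL (δn (E + P)) (F + Q) ∈ Pfnm := by
      have : mulL (δn E) F - mulL (δn (E + P)) (F + Q) = -(mulL (δn E) Q) := by
        rw [hδ, map_add]; abel
      rw [this]
      exact Pfnm.neg_mem (hPfL _ Q hQ)
    rw [qnorm_congr Pfnm hc]
    exact hcore (E + P) (F + Q)
  refine ⟨?_, ?_, ?_⟩
  · -- main product bound
    intro E F
    rw [mul_comm]
    refine le_mul_qnorm Pfn (qnorm_nonneg' Pfm F) ?_
    intro P hP
    rw [mul_comm]
    refine le_mul_qnorm Pfm (norm_nonneg _) ?_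
    intro Q hQ
    exact hrep E F P hP Q hQ
  · -- left action
    intro a E
    refine le_mul_qnorm Pfm (norm_nonneg _) ?_
    intro Q hQ
    calc qnorm Pfnm (mulL a E) ≤ ‖mulL a E + mulL a Q‖ := qnorm_le Pfnm _ (hPfL a Q hQ)
      _ = ‖mulL a (E + Q)‖ := by rw [map_add]
      _ = ‖a‖ * ‖E + Q‖ := hmulL_norm _ _
  · -- right action
    intro E a
    rw [mul_comm]
    refine le_mul_qnorm Pfn (norm_nonneg _) ?_
    intro P hP
    calc qnorm Pfnm (mulR E a) ≤ ‖mulR E a + mulR P a‖ :=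
          qnorm_le Pfnm _ (hPfR P hP a)
      _ = ‖mulR (E + P) a‖ := by rw [map_add, LinearMap.add_apply]
      _ = ‖a‖ * ‖E + P‖ := by rw [hmulR_norm]; ring
end

section
/- Let g₀ be a Lie algebra and g₁ a vector space with a bilinear bracket, δ : g₁ → g₀ linear, satisfying the Peiffer-type relation setup: define on the quotient g₁^{sab} = g₁/∼ (where [δ(E),F] ∼ [E,δ(F)]) the bracket [E,F]_{sab} := [δ(E),F]. Then, assuming the first Peiffer identity δ(x▷E) = [x,δE] for the ambient graded Lie structure, [·,·]_{sab} is antisymmetric and satisfies the Jacobi identity, making g₁^{sab} a Lie algebra, and δ : g₁^{sab} → g₀ is a morphism of Lie algebras. -/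
/-- **Kapranov's semiabelianization is a crossed module of Lie algebras.**
Let `g₀` be a Lie algebra acting (as a Lie module, via the ambient graded Lie bracket)
on `g₁`, with a linear map `δ : g₁ → g₀` satisfying the first Peiffer identity
`δ(x ▷ E) = ⁅x, δ E⁆`.  On the quotient `g₁^{sab} = g₁/N`, where `N` is spanned by the
relations `⁅δ E, F⁆ ∼ ⁅E, δ F⁆ = −⁅δ F, E⁆` (i.e. `N = span{δE ▷ F + δF ▷ E}`), the
bracket `[E,F]_{sab} := δE ▷ F` is well defined, antisymmetric and satisfies the Jacobi
(Leibniz) identity, making `g₁^{sab}` a Lie algebra, and `δ` descends to a morphism of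
Lie algebras `g₁^{sab} → g₀`. -/
theorem semiabelianization_is_lie_algebra {K : Type*} [Field K]
    {g₀ : Type*} [LieRing g₀] [LieAlgebra K g₀]
    {g₁ : Type*} [AddCommGroup g₁] [Module K g₁]
    (act : g₀ →ₗ[K] g₁ →ₗ[K] g₁)
    (hact : ∀ (x y : g₀) (E : g₁), act ⁅x, y⁆ E = act x (act y E) - act y (act x E))
    (δ : g₁ →ₗ[K] g₀)
    (hpeiffer : ∀ (x : g₀) (E : g₁), δ (act x E) = ⁅x, δ E⁆) :
    ∀ N : Submodule K g₁,
      N = Submodule.span K {m | ∃ E F : g₁, m = act (δ E) F + act (δ F) E} →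
      -- δ vanishes on the relations, hence descends to the quotient g₁^{sab} = g₁ ⧸ N
      (∀ P ∈ N, δ P = 0) ∧
      -- the bracket [E,F]_{sab} = δE ▷ F is well defined in each argument on g₁ ⧸ N
      (∀ E E' F : g₁,
        Submodule.Quotient.mk (p := N) E = Submodule.Quotient.mk E' →
        Submodule.Quotient.mk (p := N) (act (δ E) F) = Submodule.Quotient.mk (act (δ E') F)) ∧
      (∀ E F F' : g₁,
        Submodule.Quotient.mk (p := N) F = Submodule.Quotient.mk F' →
        Submodule.Quotient.mk (p := N) (act (δ E) F) = Submodule.Quotient.mk (act (δ E) F')) ∧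
      -- antisymmetry of [·,·]_{sab}
      (∀ E F : g₁,
        Submodule.Quotient.mk (p := N) (act (δ E) F) =
          -Submodule.Quotient.mk (p := N) (act (δ F) E)) ∧
      -- Jacobi identity (Leibniz form) for [·,·]_{sab}
      (∀ E F G : g₁,
        Submodule.Quotient.mk (p := N) (act (δ (act (δ E) F)) G) =
          Submodule.Quotient.mk (p := N) (act (δ E) (act (δ F) G)) -
            Submodule.Quotient.mk (p := N) (act (δ F) (act (δ E) G))) ∧
      -- δ is a morphism of Lie algebras for [·,·]_{sab}
      (∀ E F : g₁, δ (act (δ E) F) = ⁅δ E, δ F⁆) := by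

  intro N hN
  -- δ vanishes on N
  have hδ0 : ∀ P ∈ N, δ P = 0 := by
    intro P hP
    rw [hN] at hP
    refine Submodule.span_induction (p := fun P _ => δ P = 0) ?_ ?_ ?_ ?_ hP
    · rintro m ⟨E, F, rfl⟩
      simp only [map_add, hpeiffer]
      exact add_eq_zero_iff_eq_neg.mpr (lie_skew (δ E) (δ F)).symm
    · simp
    · intro x y _ _ hx hy; simp [hx, hy]
    · intro a x _ hx; simp [hx]
  have hmem : ∀ E F : g₁, act (δ E) F + act (δ F) E ∈ N := by
    intro E F
    rw [hN]
    exact Submodule.subset_span ⟨E, F, rfl⟩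
  -- N is invariant under act x
  have hinv : ∀ (x : g₀) (P : g₁), P ∈ N → act x P ∈ N := by
    intro x P hP
    rw [hN] at hP ⊢
    refine Submodule.span_induction (p := fun P _ => act x P ∈ Submodule.span K _) ?_ ?_ ?_ ?_ hP
    · rintro m ⟨E, F, rfl⟩
      have key : act x (act (δ E) F + act (δ F) E) =
          (act (δ (act x E)) F + act (δ F) (act x E)) +
          (act (δ E) (act x F) + act (δ (act x F)) E) := by
        have h1 := hact x (δ E) F
        have h2 := hact x (δ F) E
        have e1 : act (δ (act x E)) F = act x (act (δ E) F) - act (δ E) (act x F) := by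
          rw [hpeiffer, h1]
        have e2 : act (δ (act x F)) E = act x (act (δ F) E) - act (δ F) (act x E) := by
          rw [hpeiffer, h2]
        rw [e1, e2]; simp; abel
      rw [key]
      exact Submodule.add_mem _
        (Submodule.subset_span ⟨act x E, F, rfl⟩)
        (Submodule.subset_span ⟨E, act x F, by rw [add_comm]⟩)
    · simp
    · intro a b _ _ ha hb; rw [map_add]; exact Submodule.add_mem _ ha hb
    · intro a b _ hb; rw [map_smul]; exact Submodule.smul_mem _ a hb
  refine ⟨hδ0, ?_, ?_, ?_, ?_, ?_⟩
  · intro E E' F h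
    have : E - E' ∈ N := by rwa [Submodule.Quotient.eq] at h
    have hδ : δ E = δ E' := by
      have := hδ0 _ this
      rw [map_sub, sub_eq_zero] at this
      exact this
    rw [hδ]
  · intro E F F' h
    rw [Submodule.Quotient.eq] at h ⊢
    have := hinv (δ E) _ h
    rwa [map_sub] at this
  · intro E F
    rw [← Submodule.Quotient.mk_neg, Submodule.Quotient.eq]
    have := hmem E F
    simp only [sub_neg_eq_add]; exact this
    
  · intro E F G
    rw [← Submodule.Quotient.mk_sub, Submodule.Quotient.eq]
    have : act (δ (act (δ E) F)) G = act (δ E) (act (δ F) G) - act (δ F) (act (δ E) G) := by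
      rw [hpeiffer, hact]
    rw [this]; simpa using N.zero_mem
  · intro E F
    exact hpeiffer (δ E) F
end
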